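/- arXiv:1106.2090 — 2 statements merged into one kernel-verified Lean document; each statement's English description precedes it below -/
import Mathlib

section
/- Let (X,d) be a metric space, f: X → ℝ a function, and for t>0 define the Hopf-Lax function Q_t f(x) = inf_{y∈X} (f(y) + d(x,y)²/(2t)). Then for 0 < t < s, Q_s f(x) - Q_t f(x) ≤ (D⁺(x,t))²/2 · (1/s - 1/t), where D⁺(x,t) is the supremum over minimizing sequences (y_n) of F(t,x,·) of limsup_n d(x,y_n). -/
/-!
Along a minimizing sequence `(yₙ)` for `F(t,x,·)`,
`Q_s f(x) ≤ F(s,x,yₙ) = F(t,x,yₙ) - d(x,yₙ)²/2 · (1/t - 1/s)`, and `F(t,x,yₙ) → Q_t f(x)`.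
Hence `limsup d(x,yₙ)² · (1/t - 1/s)/2 ≤ Q_t f(x) - Q_s f(x)` for every minimizing sequence,
and taking the supremum over them bounds `D⁺(x,t)²` in the same way.
-/

open Filter Topology

/-- `F(t,x,y) = f(y) + d(x,y)²/(2t)`. -/
noncomputable def hopfLaxF {X : Type*} [MetricSpace X] (f : X → ℝ) (t : ℝ) (x y : X) : ℝ :=
  f y + dist x y ^ 2 / (2 * t)

/-- `(y n)` is a minimizing sequence for `F(t,x,·)`, whose infimum value is `Q`. -/
def IsMinimizingSeq {X : Type*} [MetricSpace X] (f : X → ℝ) (t : ℝ) (x : X) (Q : ℝ)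
    (y : ℕ → X) : Prop :=
  Tendsto (fun n => hopfLaxF f t x (y n)) atTop (𝓝 Q)

open Set

section SqBounded

variable {u v : ℕ → ℝ} {a : ℝ}

theorem isBoundedUnder_le_of_sq_le (hv : Tendsto v atTop (𝓝 a)) (huv : ∀ n, u n ^ 2 ≤ v n) :
    IsBoundedUnder (· ≤ ·) atTop u :=
  ((Real.continuous_sqrt.tendsto a).comp hv).isBoundedUnder_le.mono_le
    (Eventually.of_forall fun n => (le_abs_self _).trans (Real.abs_le_sqrt (huv n)))

theorem limsup_le_sqrt_of_sq_le (hu : ∀ n, 0 ≤ u n) (hv : Tendsto v atTop (𝓝 a))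
    (huv : ∀ n, u n ^ 2 ≤ v n) : limsup u atTop ≤ √a :=
  calc limsup u atTop ≤ limsup (fun n => √(v n)) atTop :=
        Filter.limsup_le_limsup
          (Eventually.of_forall fun n => (le_abs_self _).trans (Real.abs_le_sqrt (huv n)))
          (isCoboundedUnder_le_of_le atTop hu)
          ((Real.continuous_sqrt.tendsto a).comp hv).isBoundedUnder_le
    _ = √a := ((Real.continuous_sqrt.tendsto a).comp hv).limsup_eq

theorem limsup_nonneg_of_sq_le (hu : ∀ n, 0 ≤ u n) (hv : Tendsto v atTop (𝓝 a))
    (huv : ∀ n, u n ^ 2 ≤ v n) : 0 ≤ limsup u atTop :=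
  Filter.le_limsup_of_frequently_le (Frequently.of_forall hu) (isBoundedUnder_le_of_sq_le hv huv)

end SqBounded

section HopfLax

variable {X : Type*} [MetricSpace X] {f : X → ℝ} {x : X} {t s q : ℝ}

theorem hopfLaxF_sub_hopfLaxF (f : X → ℝ) (t s : ℝ) (x y : X) :
    hopfLaxF f t x y - hopfLaxF f s x y = dist x y ^ 2 / 2 * (1 / t - 1 / s) := by
  unfold hopfLaxF
  ring

theorem dist_sq_mul_le_hopfLaxF_sub (hq : q ∈ lowerBounds (range (hopfLaxF f s x))) (y : X) :
    dist x y ^ 2 / 2 * (1 / t - 1 / s) ≤ hopfLaxF f t x y - q := by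
  have hqy : q ≤ hopfLaxF f s x y := hq ⟨y, rfl⟩
  linarith [hopfLaxF_sub_hopfLaxF f t s x y]

theorem exists_isMinimizingSeq (hq : IsGLB (range (hopfLaxF f t x)) q) :
    ∃ y : ℕ → X, IsMinimizingSeq f t x q y := by
  obtain ⟨u, -, -, hu, hmem⟩ := hq.exists_seq_antitone_tendsto hq.nonempty
  choose y hy using hmem
  exact ⟨y, by simpa only [IsMinimizingSeq, hy] using hu⟩

end HopfLax

/-- If `Q t x = inf_y F(t,x,y)` (a real number, i.e. `t` is below `t_*(x)`) and
`D⁺(x,t)` is the supremum over minimizing sequences of `limsup_n d(x,y_n)`, then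
for `0 < t < s` we have `Q_s f(x) - Q_t f(x) ≤ D⁺(x,t)²/2 · (1/s - 1/t)`. -/
theorem hopfLax_time_difference_bound {X : Type*} [MetricSpace X] (f : X → ℝ)
    (Q : ℝ → X → ℝ) (x : X) (t s : ℝ) (ht : 0 < t) (hts : t < s)
    (hQt : IsGLB (Set.range (hopfLaxF f t x)) (Q t x))
    (hQs : IsGLB (Set.range (hopfLaxF f s x)) (Q s x))
    (Dp : ℝ)
    (hDp : IsLUB {L : ℝ | ∃ y : ℕ → X, IsMinimizingSeq f t x (Q t x) y ∧
      L = atTop.limsup fun n => dist x (y n)} Dp) :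
    Q s x - Q t x ≤ Dp ^ 2 / 2 * (1 / s - 1 / t) := by
  set k := (1 / t - 1 / s) / 2
  have hk : 0 < k := half_pos (sub_pos.2 (one_div_lt_one_div_of_lt ht hts))
  have hsq : ∀ y : ℕ → X, ∀ n, dist x (y n) ^ 2 ≤ (hopfLaxF f t x (y n) - Q s x) / k :=
    fun y n => (le_div_iff₀ hk).2 <| by
      linear_combination dist_sq_mul_le_hopfLaxF_sub (t := t) hQs.1 (y n)
  have hlim : ∀ y, IsMinimizingSeq f t x (Q t x) y →
      Tendsto (fun n => (hopfLaxF f t x (y n) - Q s x) / k) atTop (𝓝 ((Q t x - Q s x) / k)) :=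
    fun y hy => (hy.sub_const _).div_const _
  obtain ⟨y₀, hy₀⟩ := exists_isMinimizingSeq hQt
  have hDp_nonneg : 0 ≤ Dp := (limsup_nonneg_of_sq_le (fun _ => dist_nonneg) (hlim y₀ hy₀)
    (hsq y₀)).trans (hDp.1 ⟨y₀, hy₀, rfl⟩)
  have hDp_le : Dp ≤ √((Q t x - Q s x) / k) := hDp.2 <| by
    rintro _ ⟨y, hy, rfl⟩
    exact limsup_le_sqrt_of_sq_le (fun _ => dist_nonneg) (hlim y hy) (hsq y)
  have hQ_sub_nonneg : 0 ≤ (Q t x - Q s x) / k :=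
    ge_of_tendsto' (hlim y₀ hy₀) fun n => (sq_nonneg _).trans (hsq y₀ n)
  have hDp_sq : Dp ^ 2 * k ≤ Q t x - Q s x :=
    (le_div_iff₀ hk).1 ((Real.le_sqrt hDp_nonneg hQ_sub_nonneg).1 hDp_le)
  linarith [show Dp ^ 2 / 2 * (1 / s - 1 / t) = -(Dp ^ 2 * k) by ring]
end

section
/- For a bounded function f on a metric space, every minimizing sequence (y_n) of F(t,x,·) = f(·) + d(x,·)²/(2t) satisfies limsup_n d(x,y_n) ≤ sqrt(2t·osc(f)); i.e., D⁺(x,t) ≤ sqrt(2t·osc(f)). -/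
open Filter Topology

/-!
Since `F(t,x,·) ≥ inf f + d(x,·)²/(2t)`, the distance is controlled by the cost:
`d(x,z) ≤ sqrt(2t(F(t,x,z) - inf f))`. Along a minimizing sequence the right-hand side tends to
`sqrt(2t(inf F(t,x,·) - inf f))`, and comparing with `y = x` gives `inf F(t,x,·) ≤ f x ≤ sup f`.
-/

noncomputable section

namespace HopfLax

variable {X : Type*} [MetricSpace X]

/-- The function `F(t, x, ·)` minimized in the Hopf–Lax formula `Q_t f(x) = inf_y F(t, x, y)`. -/
def cost (f : X → ℝ) (t : ℝ) (x z : X) : ℝ := f z + dist x z ^ 2 / (2 * t)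

theorem dist_le_sqrt_cost_sub {f : X → ℝ} {t m : ℝ} (ht : 0 < t) (x : X) {z : X}
    (hm : m ≤ f z) : dist x z ≤ Real.sqrt (2 * t * (cost f t x z - m)) := by
  refine Real.le_sqrt_of_sq_le ?_
  have hsq : 2 * t * (dist x z ^ 2 / (2 * t)) = dist x z ^ 2 := by field_simp
  unfold cost
  nlinarith

theorem bddBelow_range_cost {f : X → ℝ} (hf : BddBelow (Set.range f)) {t : ℝ} (ht : 0 ≤ t)
    (x : X) : BddBelow (Set.range (cost f t x)) := by
  obtain ⟨m, hm⟩ := hf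
  refine ⟨m, ?_⟩
  rintro _ ⟨z, rfl⟩
  have : 0 ≤ dist x z ^ 2 / (2 * t) := by positivity
  linarith [hm ⟨z, rfl⟩, show cost f t x z = f z + dist x z ^ 2 / (2 * t) from rfl]

theorem iInf_cost_le {f : X → ℝ} (hf : BddBelow (Set.range f)) {t : ℝ} (ht : 0 ≤ t) (x : X) :
    ⨅ z, cost f t x z ≤ f x :=
  (ciInf_le (bddBelow_range_cost hf ht x) x).trans_eq (by simp [cost])

end HopfLax

end

open HopfLax in
theorem hopfLax_minimizing_seq_dist_bound_general {X : Type*} [MetricSpace X]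
    (f : X → ℝ) (hbdd : BddAbove (Set.range f)) (hbdd' : BddBelow (Set.range f))
    (t : ℝ) (ht : 0 < t) (x : X) (y : ℕ → X)
    (hy : Tendsto (fun n => f (y n) + dist x (y n) ^ 2 / (2 * t)) atTop
      (𝓝 (⨅ z : X, (f z + dist x z ^ 2 / (2 * t))))) :
    atTop.limsup (fun n => dist x (y n)) ≤
      Real.sqrt (2 * t * (sSup (Set.range f) - sInf (Set.range f))) := by
  set m := sInf (Set.range f)
  have hy' : Tendsto (fun n => cost f t x (y n)) atTop (𝓝 (⨅ z, cost f t x z)) := hy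
  have hbound : Tendsto (fun n => Real.sqrt (2 * t * (cost f t x (y n) - m))) atTop
      (𝓝 (Real.sqrt (2 * t * ((⨅ z, cost f t x z) - m)))) :=
    ((hy'.sub_const m).const_mul (2 * t)).sqrt
  have hinf : ⨅ z, cost f t x z ≤ sSup (Set.range f) :=
    (iInf_cost_le hbdd' ht.le x).trans (le_csSup hbdd ⟨x, rfl⟩)
  calc atTop.limsup (fun n => dist x (y n))
      ≤ atTop.limsup (fun n => Real.sqrt (2 * t * (cost f t x (y n) - m))) :=
        limsup_le_limsup
          (.of_forall fun n => dist_le_sqrt_cost_sub ht x (csInf_le hbdd' ⟨y n, rfl⟩))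
          (isCoboundedUnder_le_of_le atTop fun _ => dist_nonneg) hbound.isBoundedUnder_le
    _ = Real.sqrt (2 * t * ((⨅ z, cost f t x z) - m)) := hbound.limsup_eq
    _ ≤ Real.sqrt (2 * t * (sSup (Set.range f) - m)) := by gcongr

/-- For a bounded function `f` on a metric space, every minimizing sequence `(y n)` of
`F(t,x,·) = f(·) + d(x,·)²/(2t)` satisfies `limsup_n d(x,y_n) ≤ sqrt(2t·osc(f))`,
where `osc(f) = sup f - inf f`. -/
theorem hopfLax_minimizing_seq_dist_bound {X : Type*} [MetricSpace X] [Nonempty X]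
    (f : X → ℝ) (hbdd : BddAbove (Set.range f)) (hbdd' : BddBelow (Set.range f))
    (t : ℝ) (ht : 0 < t) (x : X) (y : ℕ → X)
    (hy : Tendsto (fun n => f (y n) + dist x (y n) ^ 2 / (2 * t)) atTop
      (𝓝 (⨅ z : X, (f z + dist x z ^ 2 / (2 * t))))) :
    atTop.limsup (fun n => dist x (y n)) ≤
      Real.sqrt (2 * t * (sSup (Set.range f) - sInf (Set.range f))) :=
  hopfLax_minimizing_seq_dist_bound_general f hbdd hbdd' t ht x y hy
end
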